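/- arXiv:1609.05301 — 11 statements merged into one kernel-verified Lean document; each statement's English description precedes it below -/
import Mathlib

section
/- In a lattice-normed vector lattice (X,p,E), every band B of X is p-closed: if a net (x_α) in B satisfies p(x_α − x) →o 0 in E for some x ∈ X, then x ∈ B. -/
/-- Order convergence of a net `x : A → E` to `l` in a lattice-ordered group:
there is a decreasing net `y` (over some directed index) with infimum `0`
such that for each index `b`, eventually `|x a - l| ≤ y b`. -/
def OConv {A E : Type*} [Preorder A] [Lattice E] [AddCommGroup E]
    (x : A → E) (l : E) : Prop :=
  ∃ (K : Type) (s : K → K → Prop) (y : K → E),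
    Nonempty K ∧
    (∀ b c : K, ∃ d : K, s b d ∧ s c d) ∧
    (∀ b c : K, s b c → y c ≤ y b) ∧
    IsGLB (Set.range y) 0 ∧
    (∀ b : K, ∃ a₀ : A, ∀ a : A, a₀ ≤ a → |x a - l| ≤ y b)

/-- `p`-convergence of a net in a lattice-normed vector lattice. -/
def PConv {A X E : Type*} [Preorder A] [Lattice X] [AddCommGroup X]
    [Lattice E] [AddCommGroup E] (p : X → E) (x : A → X) (l : X) : Prop :=
  OConv (fun a => p (x a - l)) 0

variable {X E : Type*}
  [Lattice X] [AddCommGroup X] [Module ℝ X] [CovariantClass X X (· + ·) (· ≤ ·)]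
  [Lattice E] [AddCommGroup E] [Module ℝ E] [CovariantClass E E (· + ·) (· ≤ ·)]

theorem band_is_p_closed
    (p : X → E)
    (hp_nonneg : ∀ x : X, 0 ≤ p x)
    (hp_eq_zero : ∀ x : X, p x = 0 ↔ x = 0)
    (hp_smul : ∀ (r : ℝ) (x : X), p (r • x) = |r| • p x)
    (hp_add : ∀ x y : X, p (x + y) ≤ p x + p y)
    (hp_mono : ∀ x y : X, |x| ≤ |y| → p x ≤ p y)
    (B : Set X)
    (hB_zero : (0 : X) ∈ B)
    (hB_add : ∀ x ∈ B, ∀ y ∈ B, x + y ∈ B)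
    (hB_smul : ∀ (r : ℝ), ∀ x ∈ B, r • x ∈ B)
    (hB_solid : ∀ x ∈ B, ∀ y : X, |y| ≤ |x| → y ∈ B)
    (hB_order_closed : ∀ (A : Type) [Preorder A] [Nonempty A] [IsDirected A (· ≤ ·)]
      (z : A → X) (l : X), (∀ a, z a ∈ B) → OConv z l → l ∈ B)
    {A : Type} [Preorder A] [Nonempty A] [IsDirected A (· ≤ ·)]
    (x : A → X) (l : X) (hxB : ∀ a, x a ∈ B) (hconv : PConv p x l) :
    l ∈ B := by
  classical
  obtain ⟨K, s, y, hKne, _hdir, _hanti, hglb, hev⟩ := hconv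
  set v : A → X := fun a => |x a| ⊓ |l| with hv
  have hvle : ∀ a, v a ≤ |l| := fun a => inf_le_right
  have hvB : ∀ a, v a ∈ B := by
    intro a
    refine hB_solid (x a) (hxB a) (v a) ?_
    have h0 : (0 : X) ≤ v a := le_inf (abs_nonneg _) (abs_nonneg _)
    rw [abs_of_nonneg h0]
    exact inf_le_left
  -- Key step: every upper bound of the net `v` dominates `|l|`.
  have key : ∀ u : X, (∀ a, v a ≤ u) → |l| ≤ u := by
    intro u hu
    have hle : ∀ a : A, (|l| - u) ⊔ 0 ≤ |x a - l| := by
      intro a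
      refine sup_le ?_ (abs_nonneg _)
      have h1 : |l| - u ≤ |l| - v a := sub_le_sub_left (hu a) _
      have h2 : |l| - v a = (|l| - |x a|) ⊔ (|l| - |l|) := sub_inf _ _ _
      have h3 : |l| - |x a| ≤ |x a - l| :=
        calc |l| - |x a| ≤ |(|l| - |x a|)| := le_abs_self _
          _ = |(|x a| - |l|)| := abs_sub_comm _ _
          _ ≤ |x a - l| := abs_abs_sub_abs_le _ _
      have h4 : |l| - |l| ≤ |x a - l| := by simp only [sub_self]; exact abs_nonneg (x a - l)
      calc |l| - u ≤ |l| - v a := h1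
        _ ≤ |x a - l| := by rw [h2]; exact sup_le h3 h4
    have hplb : ∀ b : K, p ((|l| - u) ⊔ 0) ≤ y b := by
      intro b
      obtain ⟨a₀, ha₀⟩ := hev b
      have h5 := ha₀ a₀ le_rfl
      rw [sub_zero, abs_of_nonneg (hp_nonneg _)] at h5
      refine le_trans (hp_mono _ _ ?_) h5
      rw [abs_of_nonneg (le_sup_right : (0:X) ≤ (|l| - u) ⊔ 0)]
      exact hle a₀
    have hlb : p ((|l| - u) ⊔ 0) ∈ lowerBounds (Set.range y) := by
      rintro e ⟨b, rfl⟩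
      exact hplb b
    have hple : p ((|l| - u) ⊔ 0) ≤ 0 := hglb.2 hlb
    have hpz : p ((|l| - u) ⊔ 0) = 0 := le_antisymm hple (hp_nonneg _)
    have hz : (|l| - u) ⊔ 0 = 0 := (hp_eq_zero _).1 hpz
    have hle0 : |l| - u ≤ 0 := by
      calc |l| - u ≤ (|l| - u) ⊔ 0 := le_sup_left
        _ = 0 := hz
    exact sub_nonpos.1 hle0
  -- B is closed under binary suprema
  have hBsup : ∀ a ∈ B, ∀ b ∈ B, a ⊔ b ∈ B := by
    intro a ha b hb
    have haB : |a| ∈ B := hB_solid a ha |a| (le_of_eq (abs_abs a))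
    have hbB : |b| ∈ B := hB_solid b hb |b| (le_of_eq (abs_abs b))
    refine hB_solid (|a| + |b|) (hB_add _ haB _ hbB) (a ⊔ b) ?_
    rw [abs_of_nonneg (add_nonneg (abs_nonneg a) (abs_nonneg b))]
    refine abs_le'.2 ⟨?_, ?_⟩
    · exact sup_le (le_trans (le_abs_self a) (le_add_of_nonneg_right (abs_nonneg b)))
        (le_trans (le_abs_self b) (le_add_of_nonneg_left (abs_nonneg a)))
    · rw [neg_sup]
      exact le_trans inf_le_left
        (le_trans (neg_le_abs a) (le_add_of_nonneg_right (abs_nonneg b)))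
  -- The net of finite suprema of `v`
  let ι : Type := {F : Finset A // F.Nonempty}
  let z : ι → X := fun F => F.1.sup' F.2 v
  haveI hιne : Nonempty ι := ⟨⟨{Classical.arbitrary A}, Finset.singleton_nonempty _⟩⟩
  haveI hιdir : IsDirected ι (· ≤ ·) :=
    ⟨fun F G => ⟨⟨F.1 ∪ G.1, F.2.mono Finset.subset_union_left⟩,
      Finset.subset_union_left, Finset.subset_union_right⟩⟩
  have hzB : ∀ F : ι, z F ∈ B := fun F =>
    Finset.sup'_mem B hBsup F.1 F.2 v (fun a _ => hvB a)
  have hzle : ∀ F : ι, z F ≤ |l| := fun F => Finset.sup'_le _ _ (fun a _ => hvle a)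
  have hzmono : ∀ F G : ι, F ≤ G → z F ≤ z G := by
    intro F G h
    exact Finset.sup'_mono v h F.2
  have hzconv : OConv z |l| := by
    refine ⟨ι, (· ≤ ·), fun F => |l| - z F, hιne, ?_, ?_, ?_, ?_⟩
    · intro b c
      exact directed_of (· ≤ ·) b c
    · intro F G h
      exact sub_le_sub_left (hzmono F G h) _
    · constructor
      · rintro e ⟨F, rfl⟩
        exact sub_nonneg.2 (hzle F)
      · intro m hm
        have hub : ∀ a : A, v a ≤ |l| - m := by
          intro a
          have h6 : m ≤ |l| - z ⟨{a}, Finset.singleton_nonempty a⟩ :=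
            hm ⟨⟨{a}, Finset.singleton_nonempty a⟩, rfl⟩
          have h7 : z ⟨{a}, Finset.singleton_nonempty a⟩ = v a := by
            simp only [z]
            exact Finset.sup'_singleton v
          rw [h7] at h6
          exact le_sub_comm.1 h6
        have h9 : |l| ≤ |l| - m := key _ hub
        have h10 : |l| + m ≤ |l| := le_sub_iff_add_le.1 h9
        exact (add_le_iff_nonpos_right _).1 h10
    · intro F
      refine ⟨F, fun G hFG => ?_⟩
      have h11 : z G - |l| ≤ 0 := sub_nonpos.2 (hzle G)
      rw [abs_of_nonpos h11, neg_sub]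
      exact sub_le_sub_left (hzmono F G hFG) _
  have habsB : |l| ∈ B := hB_order_closed ι z |l| hzB hzconv
  exact hB_solid |l| habsB l (le_of_eq (abs_abs l).symm)
end

section
/- In a lattice-normed vector lattice (X,p,E), every p-band is p-closed: if B = M^{⊥p} = {x ∈ X : p(x) ∧ p(m) = 0 for all m ∈ M} for some nonempty M ⊆ X, and a net (x_α) in B p-converges to x₀ ∈ X, then x₀ ∈ B. -/
variable {X E : Type*}
  [Lattice X] [AddCommGroup X] [Module ℝ X] [CovariantClass X X (· + ·) (· ≤ ·)]
  [Lattice E] [AddCommGroup E] [Module ℝ E] [CovariantClass E E (· + ·) (· ≤ ·)]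


private lemma inf_add_inf_aux {E : Type*} [Lattice E] [AddCommGroup E]
    [CovariantClass E E (· + ·) (· ≤ ·)] {a b c : E} (ha : 0 ≤ a) (hb : 0 ≤ b) (hc : 0 ≤ c) :
    (a + b) ⊓ c ≤ a ⊓ c + b ⊓ c := by
  have h : a ⊓ c + b ⊓ c = ((a + b) ⊓ (a + c)) ⊓ ((c + b) ⊓ (c + c)) := by
    rw [inf_add, add_inf, add_inf]
  rw [h]
  refine le_inf (le_inf inf_le_left ?_) (le_inf ?_ ?_)
  · exact inf_le_right.trans (le_add_of_nonneg_left ha)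
  · exact inf_le_right.trans (le_add_of_nonneg_right hb)
  · exact inf_le_right.trans (le_add_of_nonneg_right hc)

theorem p_band_is_p_closed {A : Type*} [Preorder A] [Nonempty A] [IsDirected A (· ≤ ·)]
    (p : X → E)
    (hp_nonneg : ∀ x : X, 0 ≤ p x)
    (hp_eq_zero : ∀ x : X, p x = 0 ↔ x = 0)
    (hp_smul : ∀ (r : ℝ) (x : X), p (r • x) = |r| • p x)
    (hp_add : ∀ x y : X, p (x + y) ≤ p x + p y)
    (hp_mono : ∀ x y : X, |x| ≤ |y| → p x ≤ p y)
    (M : Set X) (hM : M.Nonempty)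
    (x : A → X) (x₀ : X)
    (hxB : ∀ a : A, ∀ m ∈ M, p (x a) ⊓ p m = 0)
    (hconv : PConv p x x₀) :
    ∀ m ∈ M, p x₀ ⊓ p m = 0 := by
  intro m hm
  obtain ⟨K, t, y, ⟨k0⟩, hdir, hmono, hglb, hev⟩ := hconv
  have key : ∀ b : K, p x₀ ⊓ p m ≤ y b := by
    intro b
    obtain ⟨a₀, ha⟩ := hev b
    have h1 : p (x a₀ - x₀) ≤ y b := by
      have h := ha a₀ le_rfl
      rw [sub_zero] at h
      exact (le_abs_self _).trans h
    have h2 : p x₀ ≤ p (x₀ - x a₀) + p (x a₀) := by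
      have := hp_add (x₀ - x a₀) (x a₀)
      simpa using this
    have h3 : p (x₀ - x a₀) = p (x a₀ - x₀) := by
      have e : |x₀ - x a₀| = |x a₀ - x₀| := abs_sub_comm _ _
      exact le_antisymm (hp_mono _ _ e.le) (hp_mono _ _ e.ge)
    calc p x₀ ⊓ p m ≤ (p (x₀ - x a₀) + p (x a₀)) ⊓ p m :=
          inf_le_inf_right _ (h2.trans_eq rfl)
      _ ≤ p (x₀ - x a₀) ⊓ p m + p (x a₀) ⊓ p m :=
          inf_add_inf_aux (hp_nonneg _) (hp_nonneg _) (hp_nonneg _)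
      _ = p (x₀ - x a₀) ⊓ p m := by rw [hxB a₀ m hm, add_zero]
      _ ≤ p (x₀ - x a₀) := inf_le_left
      _ = p (x a₀ - x₀) := h3
      _ ≤ y b := h1
  have hlb : p x₀ ⊓ p m ∈ lowerBounds (Set.range y) := by
    rintro _ ⟨b, rfl⟩; exact key b
  have hle : p x₀ ⊓ p m ≤ 0 := hglb.2 hlb
  exact le_antisymm hle (le_inf (hp_nonneg _) (hp_nonneg _))
end

section
/- In a lattice-normed vector lattice (X,p,E), if a net (x_α) is increasing and p-converges to x (i.e., p(x_α − x) →o 0 in E), then x_α ↑ x, i.e., x is the supremum of the net; in particular every monotone p-convergent net order-converges to its p-limit. -/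
variable {X E : Type*}
  [Lattice X] [AddCommGroup X] [Module ℝ X] [CovariantClass X X (· + ·) (· ≤ ·)]
  [Lattice E] [AddCommGroup E] [Module ℝ E] [CovariantClass E E (· + ·) (· ≤ ·)]

theorem monotone_p_convergent_order_converges {A : Type*} [Preorder A] [Nonempty A] [IsDirected A (· ≤ ·)]
    (p : X → E)
    (hp_nonneg : ∀ x : X, 0 ≤ p x)
    (hp_eq_zero : ∀ x : X, p x = 0 ↔ x = 0)
    (hp_smul : ∀ (r : ℝ) (x : X), p (r • x) = |r| • p x)
    (hp_add : ∀ x y : X, p (x + y) ≤ p x + p y)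
    (hp_mono : ∀ x y : X, |x| ≤ |y| → p x ≤ p y)
    (x : A → X) (l : X)
    (hmono : Monotone x)
    (hconv : PConv p x l) :
    IsLUB (Set.range x) l := by
  obtain ⟨K, s, y, ⟨b₀⟩, hdir, hanti, hglb, hev⟩ := hconv
  have posPart_le_abs : ∀ v : X, v⁺ ≤ |v| := fun v =>
    sup_le (le_abs_self v) (abs_nonneg v)
  have key : ∀ v : X, 0 ≤ v → (∀ b : K, p v ≤ y b) → v = 0 := by
    intro v hv h
    have hlb : p v ∈ lowerBounds (Set.range y) := by
      rintro _ ⟨b, rfl⟩; exact h b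
    exact (hp_eq_zero v).1 (le_antisymm (hglb.2 hlb) (hp_nonneg v))
  have hub : ∀ a : A, x a ≤ l := by
    intro a
    have hb : ∀ b : K, p ((x a - l)⁺) ≤ y b := by
      intro b
      obtain ⟨a₀, ha₀⟩ := hev b
      obtain ⟨a', ha1, ha2⟩ := directed_of (· ≤ ·) a a₀
      have h1 : |p (x a' - l) - 0| ≤ y b := ha₀ a' ha2
      rw [sub_zero, abs_of_nonneg (hp_nonneg _)] at h1
      refine le_trans (hp_mono _ _ ?_) h1
      rw [abs_of_nonneg (posPart_nonneg _)]
      calc (x a - l)⁺ ≤ (x a' - l)⁺ :=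
            posPart_mono (sub_le_sub_right (hmono ha1) l)
        _ ≤ |x a' - l| := posPart_le_abs _
    have h0 := key _ (posPart_nonneg _) hb
    exact sub_nonpos.1 (posPart_eq_zero.1 h0)
  constructor
  · rintro _ ⟨a, rfl⟩; exact hub a
  · intro u hu
    have hb : ∀ b : K, p ((l - u)⁺) ≤ y b := by
      intro b
      obtain ⟨a₀, ha₀⟩ := hev b
      have h1 : |p (x a₀ - l) - 0| ≤ y b := ha₀ a₀ le_rfl
      rw [sub_zero, abs_of_nonneg (hp_nonneg _)] at h1
      refine le_trans (hp_mono _ _ ?_) h1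
      rw [abs_of_nonneg (posPart_nonneg _)]
      have hxu : x a₀ ≤ u := hu ⟨a₀, rfl⟩
      calc (l - u)⁺ ≤ (l - x a₀)⁺ :=
            posPart_mono (sub_le_sub_left hxu l)
        _ ≤ |l - x a₀| := posPart_le_abs _
        _ = |x a₀ - l| := (abs_sub_comm l (x a₀))
    have h0 := key _ (posPart_nonneg _) hb
    exact sub_nonpos.1 (posPart_eq_zero.1 h0)
end

section
/- An LNVL (X,p,E) is op-continuous (x_α →o 0 in X implies p(x_α) →o 0 in E) if and only if x_α ↓ 0 in X implies p(x_α) ↓ 0 in E. -/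
variable {X E : Type*}
  [Lattice X] [AddCommGroup X] [Module ℝ X] [CovariantClass X X (· + ·) (· ≤ ·)]
  [Lattice E] [AddCommGroup E] [Module ℝ E] [CovariantClass E E (· + ·) (· ≤ ·)]

theorem op_continuous_iff
    (p : X → E)
    (hp_nonneg : ∀ x : X, 0 ≤ p x)
    (hp_eq_zero : ∀ x : X, p x = 0 ↔ x = 0)
    (hp_smul : ∀ (r : ℝ) (x : X), p (r • x) = |r| • p x)
    (hp_add : ∀ x y : X, p (x + y) ≤ p x + p y)
    (hp_mono : ∀ x y : X, |x| ≤ |y| → p x ≤ p y) :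
    (∀ (A : Type) [Preorder A] [Nonempty A] [IsDirected A (· ≤ ·)] (x : A → X),
        OConv x 0 → OConv (fun a => p (x a)) 0)
    ↔
    (∀ (A : Type) [Preorder A] [Nonempty A] [IsDirected A (· ≤ ·)] (x : A → X),
        Antitone x → IsGLB (Set.range x) 0 →
        Antitone (fun a => p (x a)) ∧ IsGLB (Set.range fun a => p (x a)) 0) := by
  constructor
  · -- op-continuity ⇒ monotone continuity
    intro h A _ _ _ x hx hglb
    have hx0 : ∀ a, 0 ≤ x a := fun a => hglb.1 ⟨a, rfl⟩
    have habs : ∀ a, |x a| = x a := fun a => abs_of_nonneg (hx0 a)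
    have hanti : Antitone fun a => p (x a) := by
      intro a b hab
      exact hp_mono _ _ (by rw [habs, habs]; exact hx hab)
    refine ⟨hanti, ?_⟩
    have hoc : OConv x 0 := by
      refine ⟨A, (· ≤ ·), x, ‹Nonempty A›, fun b c => directed_of (· ≤ ·) b c,
        fun b c hbc => hx hbc, hglb, fun b => ⟨b, fun a hba => ?_⟩⟩
      rw [sub_zero, habs]
      exact hx hba
    obtain ⟨K, s, y, hKne, hdir, hmono, hyglb, hdom⟩ := h A x hoc
    constructor
    · rintro _ ⟨a, rfl⟩
      exact hp_nonneg _
    · intro w hw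
      have hwy : ∀ b, w ≤ y b := by
        intro b
        obtain ⟨a₀, ha₀⟩ := hdom b
        have := ha₀ a₀ le_rfl
        rw [sub_zero, abs_of_nonneg (hp_nonneg _)] at this
        exact le_trans (hw ⟨a₀, rfl⟩) this
      exact hyglb.2 (by rintro _ ⟨b, rfl⟩; exact hwy b)
  · -- monotone continuity ⇒ op-continuity
    intro h A _ _ _ x hx
    obtain ⟨K, s, y, hKne, hdir, hmono, hyglb, hdom⟩ := hx
    have hy0 : ∀ b, 0 ≤ y b := fun b => hyglb.1 ⟨b, rfl⟩
    letI : Preorder K :=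
      { le := fun b c => y c ≤ y b
        le_refl := fun b => le_rfl
        le_trans := fun a b c hab hbc => le_trans hbc hab }
    haveI : IsDirected K (· ≤ ·) := ⟨fun b c => by
      obtain ⟨d, hbd, hcd⟩ := hdir b c
      exact ⟨d, hmono _ _ hbd, hmono _ _ hcd⟩⟩
    haveI : Nonempty K := hKne
    have hyanti : Antitone y := fun b c hbc => hbc
    obtain ⟨hpanti, hpglb⟩ := h K y hyanti hyglb
    refine ⟨K, s, fun b => p (y b), hKne, hdir, ?_, hpglb, ?_⟩
    · intro b c hbc
      exact hp_mono _ _ (by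
        rw [abs_of_nonneg (hy0 c), abs_of_nonneg (hy0 b)]
        exact hmono _ _ hbc)
    · intro b
      obtain ⟨a₀, ha₀⟩ := hdom b
      refine ⟨a₀, fun a haa => ?_⟩
      have h1 := ha₀ a haa
      rw [sub_zero] at h1
      rw [sub_zero, abs_of_nonneg (hp_nonneg _)]
      exact hp_mono _ _ (by rw [abs_of_nonneg (hy0 b)]; exact h1)
end

section
/- Every p-KB-space is op-continuous: if (X,p,E) is an LNVL in which every increasing p-bounded net in X₊ is p-convergent, then x_α ↓ 0 in X implies p(x_α) ↓ 0 in E. -/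
variable {X E : Type*}
  [Lattice X] [AddCommGroup X] [Module ℝ X] [CovariantClass X X (· + ·) (· ≤ ·)]
  [Lattice E] [AddCommGroup E] [Module ℝ E] [CovariantClass E E (· + ·) (· ≤ ·)]

theorem p_KB_space_op_continuous
    (p : X → E)
    (hp_nonneg : ∀ x : X, 0 ≤ p x)
    (hp_eq_zero : ∀ x : X, p x = 0 ↔ x = 0)
    (hp_smul : ∀ (r : ℝ) (x : X), p (r • x) = |r| • p x)
    (hp_add : ∀ x y : X, p (x + y) ≤ p x + p y)
    (hp_mono : ∀ x y : X, |x| ≤ |y| → p x ≤ p y)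
    (h_pKB : ∀ (A : Type) [Preorder A] [Nonempty A] [IsDirected A (· ≤ ·)] (x : A → X),
        Monotone x → (∀ a, 0 ≤ x a) → (∃ e : E, ∀ a, p (x a) ≤ e) → ∃ l : X, PConv p x l) :
    ∀ (A : Type) [Preorder A] [Nonempty A] [IsDirected A (· ≤ ·)] (x : A → X),
      Antitone x → IsGLB (Set.range x) 0 →
      Antitone (fun a => p (x a)) ∧ IsGLB (Set.range fun a => p (x a)) 0 := by
  intro A _ _ _ x hanti hglb
  have hx0 : ∀ a, 0 ≤ x a := fun a => hglb.1 ⟨a, rfl⟩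
  have hpx_anti : Antitone fun a => p (x a) := by
    intro a b hab
    exact hp_mono _ _ (by
      rw [abs_of_nonneg (hx0 b), abs_of_nonneg (hx0 a)]
      exact hanti hab)
  refine ⟨hpx_anti, ?_⟩
  obtain ⟨a₀⟩ := ‹Nonempty A›
  let A' := {a : A // a₀ ≤ a}
  haveI : Nonempty A' := ⟨⟨a₀, le_refl _⟩⟩
  haveI : IsDirected A' (· ≤ ·) := ⟨fun a b => by
    obtain ⟨c, hc1, hc2⟩ := directed_of (· ≤ ·) a.1 b.1
    exact ⟨⟨c, le_trans a.2 hc1⟩, hc1, hc2⟩⟩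
  set y : A' → X := fun a => x a₀ - x a.1 with hy
  have hymono : Monotone y := fun a b hab => sub_le_sub_left (hanti hab) _
  have hynn : ∀ a, 0 ≤ y a := fun a => sub_nonneg.2 (hanti a.2)
  have hbdd : ∃ e : E, ∀ a, p (y a) ≤ e := by
    refine ⟨p (x a₀), fun a => hp_mono _ _ ?_⟩
    rw [abs_of_nonneg (hynn a), abs_of_nonneg (hx0 a₀)]
    exact sub_le_self _ (hx0 a.1)
  obtain ⟨l, K, s, z, hKne, hKdir, hzanti, hzglb, hz⟩ := h_pKB A' y hymono hynn hbdd
  -- simplify hz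
  have hz' : ∀ k : K, ∃ a₁ : A', ∀ a : A', a₁ ≤ a → p (y a - l) ≤ z k := by
    intro k
    obtain ⟨a₁, h₁⟩ := hz k
    refine ⟨a₁, fun a ha => ?_⟩
    have := h₁ a ha
    rwa [sub_zero, abs_of_nonneg (hp_nonneg _)] at this
  have hzero : ∀ e : E, 0 ≤ e → (∀ k, e ≤ z k) → e = 0 := by
    intro e he h
    refine le_antisymm (hzglb.2 ?_) he
    rintro _ ⟨k, rfl⟩
    exact h k
  -- every y a ≤ l
  have hyl : ∀ a : A', y a ≤ l := by
    intro a
    have h0 : (y a - l) ⊔ 0 = 0 := by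
      rw [← hp_eq_zero]
      apply hzero _ (hp_nonneg _)
      intro k
      obtain ⟨a₁, h₁⟩ := hz' k
      obtain ⟨b, hb1, hb2⟩ := directed_of (· ≤ ·) a a₁
      refine le_trans (hp_mono _ _ ?_) (h₁ b hb2)
      rw [abs_of_nonneg (le_sup_right : (0:X) ≤ _)]
      exact sup_le (le_trans (sub_le_sub_right (hymono hb1) _) (le_abs_self _))
        (abs_nonneg _)
    exact sub_nonpos.mp (sup_eq_right.mp h0)
  -- l ≤ x a₀
  have hlx : l ≤ x a₀ := by
    have h0 : (l - x a₀) ⊔ 0 = 0 := by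
      rw [← hp_eq_zero]
      apply hzero _ (hp_nonneg _)
      intro k
      obtain ⟨a₁, h₁⟩ := hz' k
      refine le_trans (hp_mono _ _ ?_) (h₁ a₁ (le_refl _))
      rw [abs_of_nonneg (le_sup_right : (0:X) ≤ _)]
      refine sup_le ?_ (abs_nonneg _)
      have h2 : l - x a₀ ≤ l - y a₁ := by
        have : y a₁ ≤ x a₀ := by
          rw [hy]
          exact sub_le_self _ (hx0 a₁.1)
        exact sub_le_sub_left this _
      refine le_trans h2 ?_
      rw [← neg_sub (y a₁) l]
      exact neg_le_abs _
    exact sub_nonpos.mp (sup_eq_right.mp h0)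
  -- x a₀ ≤ l
  have hxl : x a₀ ≤ l := by
    have hlb : (x a₀ - l) ∈ lowerBounds (Set.range x) := by
      rintro _ ⟨a, rfl⟩
      obtain ⟨b, hb1, hb2⟩ := directed_of (· ≤ ·) a a₀
      have h1 : x a₀ - l ≤ x b := by
        have := hyl ⟨b, hb2⟩
        rw [hy] at this
        simpa [sub_le_iff_le_add, sub_le_iff_le_add] using sub_le_sub_right this (l - x b)
      exact le_trans h1 (hanti hb1)
    exact sub_nonpos.mp (hglb.2 hlb)
  have hleq : l = x a₀ := le_antisymm hlx hxl
  -- p (y a - l) = p (x a)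
  have hpy : ∀ a : A', p (y a - l) = p (x a.1) := by
    intro a
    have habs : |y a - l| = |x a.1| := by
      have h3 : y a - l = -(x a.1) := by
        rw [hleq]
        show x a₀ - x a.1 - x a₀ = -(x a.1)
        abel
      rw [h3, abs_neg]
    exact le_antisymm (hp_mono _ _ (le_of_eq habs)) (hp_mono _ _ (ge_of_eq habs))
  constructor
  · rintro _ ⟨a, rfl⟩
    exact hp_nonneg _
  · intro c hc
    refine hzglb.2 ?_
    rintro _ ⟨k, rfl⟩
    obtain ⟨a₁, h₁⟩ := hz' k
    have := h₁ a₁ (le_refl _)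
    rw [hpy a₁] at this
    exact le_trans (hc ⟨a₁.1, rfl⟩) this
end

section
/- Every p-KB-space is order complete: if (X,p,E) is an LNVL in which every increasing p-bounded net in X₊ is p-convergent, then every net 0 ≤ x_α ↑ ≤ z in X has a supremum. -/
variable {X E : Type*}
  [Lattice X] [AddCommGroup X] [Module ℝ X] [CovariantClass X X (· + ·) (· ≤ ·)]
  [Lattice E] [AddCommGroup E] [Module ℝ E] [CovariantClass E E (· + ·) (· ≤ ·)]

theorem p_KB_space_order_complete
    (p : X → E)
    (hp_nonneg : ∀ x : X, 0 ≤ p x)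
    (hp_eq_zero : ∀ x : X, p x = 0 ↔ x = 0)
    (hp_smul : ∀ (r : ℝ) (x : X), p (r • x) = |r| • p x)
    (hp_add : ∀ x y : X, p (x + y) ≤ p x + p y)
    (hp_mono : ∀ x y : X, |x| ≤ |y| → p x ≤ p y)
    (h_pKB : ∀ (A : Type) [Preorder A] [Nonempty A] [IsDirected A (· ≤ ·)] (x : A → X),
        Monotone x → (∀ a, 0 ≤ x a) → (∃ e : E, ∀ a, p (x a) ≤ e) → ∃ l : X, PConv p x l) :
    ∀ (A : Type) [Preorder A] [Nonempty A] [IsDirected A (· ≤ ·)] (x : A → X) (z : X),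
      (∀ a, 0 ≤ x a) → Monotone x → (∀ a, x a ≤ z) → ∃ s : X, IsLUB (Set.range x) s := by
  intro A _ _ _ x z hx0 hmono hxz
  obtain ⟨l, hl⟩ := h_pKB A x hmono hx0 ⟨p z, fun a => hp_mono _ _ (by
    rw [abs_of_nonneg (hx0 a), abs_of_nonneg ((hx0 a).trans (hxz a))]; exact hxz a)⟩
  obtain ⟨K, s, y, hK, hdir, hanti, hglb, hconv⟩ := hl
  -- key: any w with p w ≤ y b for all b is 0
  have key : ∀ w : X, (∀ b : K, p w ≤ y b) → w = 0 := by
    intro w hw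
    have h0 : p w ≤ 0 := hglb.2 (fun e he => by obtain ⟨b, rfl⟩ := he; exact hw b)
    exact (hp_eq_zero w).mp (le_antisymm h0 (hp_nonneg w))
  -- simplify convergence: p (x a - l) ≤ y b eventually
  have hconv' : ∀ b : K, ∃ a₀ : A, ∀ a : A, a₀ ≤ a → p (x a - l) ≤ y b := by
    intro b
    obtain ⟨a₀, ha⟩ := hconv b
    exact ⟨a₀, fun a h => by
      have := ha a h
      rwa [sub_zero, abs_of_nonneg (hp_nonneg _)] at this⟩
  refine ⟨l, ?_, ?_⟩
  · rintro _ ⟨a, rfl⟩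
    -- x a ≤ l
    have hpos : (x a - l) ⊔ 0 = 0 := by
      apply key
      intro b
      obtain ⟨a₀, ha₀⟩ := hconv' b
      obtain ⟨a', ha1, ha2⟩ := directed_of (· ≤ ·) a a₀
      refine le_trans (hp_mono _ _ ?_) (ha₀ a' ha2)
      rw [abs_of_nonneg le_sup_right]
      calc (x a - l) ⊔ 0 ≤ (x a' - l) ⊔ 0 :=
            sup_le_sup_right (sub_le_sub_right (hmono ha1) l) 0
        _ ≤ |x a' - l| := sup_le (le_abs_self _) (abs_nonneg _)
    have := le_sup_left.trans hpos.le
    exact sub_nonpos.mp this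
  · intro u hu
    -- l ≤ u
    have hpos : (l - u) ⊔ 0 = 0 := by
      apply key
      intro b
      obtain ⟨a₀, ha₀⟩ := hconv' b
      refine le_trans (hp_mono _ _ ?_) (ha₀ a₀ le_rfl)
      rw [abs_of_nonneg le_sup_right]
      have hxu : x a₀ ≤ u := hu ⟨a₀, rfl⟩
      calc (l - u) ⊔ 0 ≤ (l - x a₀) ⊔ 0 :=
            sup_le_sup_right (sub_le_sub_left hxu l) 0
        _ ≤ |x a₀ - l| := by rw [abs_sub_comm]; exact sup_le (le_abs_self _) (abs_nonneg _)
    have := le_sup_left.trans hpos.le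
    exact sub_nonpos.mp this
end

section
/- Let (X,p,E) be a p-KB-space and Y ⊆ X an order-closed sublattice. Then (Y,p,E) is a p-KB-space: every increasing p-bounded net in Y₊ p-converges to an element of Y. -/
variable {X E : Type*}
  [Lattice X] [AddCommGroup X] [Module ℝ X] [CovariantClass X X (· + ·) (· ≤ ·)]
  [Lattice E] [AddCommGroup E] [Module ℝ E] [CovariantClass E E (· + ·) (· ≤ ·)]

theorem order_closed_sublattice_of_p_KB
    (p : X → E)
    (hp_nonneg : ∀ x : X, 0 ≤ p x)
    (hp_eq_zero : ∀ x : X, p x = 0 ↔ x = 0)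
    (hp_smul : ∀ (r : ℝ) (x : X), p (r • x) = |r| • p x)
    (hp_add : ∀ x y : X, p (x + y) ≤ p x + p y)
    (hp_mono : ∀ x y : X, |x| ≤ |y| → p x ≤ p y)
    (h_pKB : ∀ (A : Type) [Preorder A] [Nonempty A] [IsDirected A (· ≤ ·)] (x : A → X),
        Monotone x → (∀ a, 0 ≤ x a) → (∃ e : E, ∀ a, p (x a) ≤ e) → ∃ l : X, PConv p x l)
    (Y : Set X)
    (hY_zero : (0 : X) ∈ Y)
    (hY_add : ∀ x ∈ Y, ∀ y ∈ Y, x + y ∈ Y)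
    (hY_smul : ∀ (r : ℝ), ∀ x ∈ Y, r • x ∈ Y)
    (hY_sup : ∀ x ∈ Y, ∀ y ∈ Y, x ⊔ y ∈ Y)
    (hY_inf : ∀ x ∈ Y, ∀ y ∈ Y, x ⊓ y ∈ Y)
    (hY_order_closed : ∀ (A : Type) [Preorder A] [Nonempty A] [IsDirected A (· ≤ ·)]
      (z : A → X) (l : X), (∀ a, z a ∈ Y) → OConv z l → l ∈ Y) :
    ∀ (A : Type) [Preorder A] [Nonempty A] [IsDirected A (· ≤ ·)] (y : A → X),
      (∀ a, y a ∈ Y) → (∀ a, 0 ≤ y a) → Monotone y → (∃ e : E, ∀ a, p (y a) ≤ e) →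
      ∃ l ∈ Y, PConv p y l := by
  intro A _ _ _ y hYmem hpos hmono hbdd
  obtain ⟨l, hl⟩ := h_pKB A y hmono hpos hbdd
  obtain ⟨K, s, u, hK, hdir, hanti, hglb, hev⟩ := hl
  -- key: any nonneg v dominated cofinally by |y a - l| is zero
  have key : ∀ v : X, 0 ≤ v → (∀ a : A, ∃ a' : A, a ≤ a' ∧ v ≤ |y a' - l|) → v = 0 := by
    intro v hv h
    have hlb : ∀ b : K, p v ≤ u b := by
      intro b
      obtain ⟨a₀, ha₀⟩ := hev b
      obtain ⟨a', ha', hva'⟩ := h a₀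
      have h1 := ha₀ a' ha'
      have h2 : p v ≤ p (y a' - l) := hp_mono _ _ (by rwa [abs_of_nonneg hv])
      have h3 : p (y a' - l) ≤ u b := by
        simpa [abs_of_nonneg (hp_nonneg (y a' - l))] using h1
      exact h2.trans h3
    have hle0 : p v ≤ 0 := hglb.2 (by rintro _ ⟨b, rfl⟩; exact hlb b)
    exact (hp_eq_zero v).1 (le_antisymm hle0 (hp_nonneg _))
  -- step 1: y a ≤ l for all a
  have hle : ∀ a, y a ≤ l := by
    intro a
    have hz : (y a - l) ⊔ 0 = 0 := by
      refine key _ le_sup_right ?_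
      intro a₀
      obtain ⟨c, hac, ha₀c⟩ := directed_of (· ≤ ·) a a₀
      refine ⟨c, ha₀c, sup_le ?_ (abs_nonneg _)⟩
      calc y a - l ≤ y c - l := sub_le_sub_right (hmono hac) l
        _ ≤ |y c - l| := le_abs_self _
    have h : y a - l ≤ 0 := by
      rw [← hz]; exact le_sup_left
    exact sub_nonpos.1 h
  have habs : ∀ a, |y a - l| = l - y a := by
    intro a
    rw [abs_sub_comm, abs_of_nonneg (sub_nonneg.2 (hle a))]
  -- step 2: order convergence of y to l
  have hoconv : OConv y l := by
    refine ⟨A, (· ≤ ·), fun a => l - y a, ‹_›, fun b c => directed_of (· ≤ ·) b c,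
      fun b c hbc => sub_le_sub_left (hmono hbc) l, ⟨?_, ?_⟩, fun b => ⟨b, fun a hba => ?_⟩⟩
    · rintro _ ⟨a, rfl⟩
      exact sub_nonneg.2 (hle a)
    · intro w hw
      have hz : w ⊔ 0 = 0 := by
        refine key _ le_sup_right ?_
        intro a₀
        refine ⟨a₀, le_refl _, sup_le ?_ (abs_nonneg _)⟩
        rw [habs a₀]
        exact hw ⟨a₀, rfl⟩
      rw [← hz]; exact le_sup_left
    · rw [habs a]
      exact sub_le_sub_left (hmono hba) l
  exact ⟨l, hY_order_closed A y l hYmem hoconv, K, s, u, hK, hdir, hanti, hglb, hev⟩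
end

section
/- Every p-band in a p-Fatou space is a band: if (X,p,E) satisfies that 0 ≤ x_α ↑ x implies p(x_α) ↑ p(x), and B = M^{⊥p} for nonempty M ⊆ X, then B is a band of the vector lattice X. -/
lemma inf_eq_zero_of_le {F : Type*} [Lattice F] [Zero F] {a b c : F} (ha : 0 ≤ a) (hc : 0 ≤ c)
    (hab : a ≤ b) (hbc : b ⊓ c = 0) : a ⊓ c = 0 :=
  le_antisymm ((inf_le_inf_right c hab).trans_eq hbc) (le_inf ha hc)

section LatticeOrderedGroup

variable {F : Type*} [Lattice F] [AddCommGroup F] [AddLeftMono F]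

lemma add_inf_eq_zero {a b c : F} (ha : 0 ≤ a) (hb : 0 ≤ b) (hc : 0 ≤ c)
    (hac : a ⊓ c = 0) (hbc : b ⊓ c = 0) : (a + b) ⊓ c = 0 := by
  have h : (a + b) ⊓ c ≤ b :=
    calc (a + b) ⊓ c ≤ (a + b) ⊓ (c + b) := inf_le_inf_left _ (le_add_of_nonneg_right hb)
      _ = b := by rw [← inf_add, hac, zero_add]
  refine le_antisymm ?_ (le_inf (add_nonneg ha hb) hc)
  exact hbc ▸ le_inf h inf_le_right

lemma inf_add_le_add_inf {a b : F} (c : F) (hba : b ≤ a) : a ⊓ c + b ≤ a + b ⊓ c := by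
  rw [inf_add, add_inf]
  exact inf_le_inf_left _ (by rw [add_comm a c]; gcongr)

lemma IsLUB.inf_const {ι : Type*} {f : ι → F} {a : F} (h : IsLUB (Set.range f) a) (c : F) :
    IsLUB (Set.range fun i => f i ⊓ c) (a ⊓ c) := by
  refine ⟨?_, fun w hw => ?_⟩
  · rintro _ ⟨i, rfl⟩
    exact inf_le_inf_right c (h.1 ⟨i, rfl⟩)
  have hbound : a ≤ a + w - a ⊓ c := h.2 <| by
    rintro _ ⟨i, rfl⟩
    refine le_sub_iff_add_le.2 ?_
    calc f i + a ⊓ c = a ⊓ c + f i := add_comm _ _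
      _ ≤ a + f i ⊓ c := inf_add_le_add_inf c (h.1 ⟨i, rfl⟩)
      _ ≤ a + w := add_le_add_right (hw ⟨i, rfl⟩) a
  exact le_of_add_le_add_left (le_sub_iff_add_le.1 hbound)

lemma abs_sub_abs_inf_le_abs {z l y : F} (h : |z - l| ≤ y) : |l| - |l| ⊓ y ≤ |z| := by
  refine sub_le_comm.1 (le_inf (sub_le_self _ (abs_nonneg z)) ?_)
  calc |l| - |z| ≤ |l - z| := by
        have := abs_add_le z (l - z)
        rwa [add_sub_cancel, ← sub_le_iff_le_add'] at this
    _ = |z - l| := abs_sub_comm l z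
    _ ≤ y := h

lemma IsGLB.isLUB_range_sub_inf {K : Type*} {y : K → F} (hy : IsGLB (Set.range y) 0)
    {a : F} (ha : 0 ≤ a) : IsLUB (Set.range fun k => a - a ⊓ y k) a := by
  refine ⟨?_, fun w hw => ?_⟩
  · rintro _ ⟨k, rfl⟩
    exact sub_le_self _ (le_inf ha (hy.1 ⟨k, rfl⟩))
  · refine sub_nonpos.1 (hy.2 ?_)
    rintro _ ⟨k, rfl⟩
    exact (sub_le_comm.1 (hw ⟨k, rfl⟩)).trans inf_le_right

lemma LatticeOrderedAddCommGroup.IsSolid.mem_of_oConv {S : Set F} (hS : IsSolid S)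
    (hS_sup : ∀ (K : Type) [Preorder K] [Nonempty K] [IsDirected K (· ≤ ·)] (x : K → F) (l : F),
      (∀ k, 0 ≤ x k) → Monotone x → (∀ k, x k ∈ S) → IsLUB (Set.range x) l → l ∈ S)
    {A : Type*} [Preorder A] {z : A → F} {l : F} (hz : ∀ a, z a ∈ S) (h : OConv z l) :
    l ∈ S := by
  obtain ⟨K, _, y, _, hdir, hanti, hglb, hconv⟩ := h
  -- `b ≤ c ↔ y c ≤ y b`
  let _ : Preorder K := Preorder.lift (OrderDual.toDual ∘ y)
  have : IsDirected K (· ≤ ·) :=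
    ⟨fun b c => (hdir b c).imp fun d hd => ⟨hanti _ _ hd.1, hanti _ _ hd.2⟩⟩
  have hpos : ∀ k, 0 ≤ |l| - |l| ⊓ y k := fun k => sub_nonneg.2 inf_le_left
  have hmono : Monotone fun k => |l| - |l| ⊓ y k := fun b c hbc =>
    sub_le_sub_left (inf_le_inf_left _ hbc) _
  have hmem : ∀ k, |l| - |l| ⊓ y k ∈ S := fun k => by
    obtain ⟨a, ha⟩ := hconv k
    refine hS (hz a) ?_
    rw [abs_of_nonneg (hpos k)]
    exact abs_sub_abs_inf_le_abs (ha a le_rfl)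
  have habs := hS_sup K _ |l| hpos hmono hmem (hglb.isLUB_range_sub_inf (abs_nonneg l))
  exact hS habs (abs_abs l).ge

end LatticeOrderedGroup

/-- The `p`-band `M^{⊥p}`. -/
def pBand {X E : Type*} [Lattice E] [Zero E] (p : X → E) (M : Set X) : Set X :=
  {x | ∀ m ∈ M, p x ⊓ p m = 0}

section pBand

variable {X E : Type*} [Lattice E] [AddCommGroup E] {p : X → E} {M : Set X}

lemma mem_pBand_of_le (hp_nonneg : ∀ x, 0 ≤ p x) {x y : X} (hx : x ∈ pBand p M)
    (hyx : p y ≤ p x) : y ∈ pBand p M := fun m hm =>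
  inf_eq_zero_of_le (hp_nonneg y) (hp_nonneg m) hyx (hx m hm)

open LatticeOrderedAddCommGroup in
lemma isSolid_pBand [Lattice X] [AddCommGroup X] (hp_nonneg : ∀ x, 0 ≤ p x)
    (hp_mono : ∀ x y, |x| ≤ |y| → p x ≤ p y) : IsSolid (pBand p M) := fun _ hx _ hyx =>
  mem_pBand_of_le hp_nonneg hx (hp_mono _ _ hyx)

variable [AddLeftMono E]

lemma add_mem_pBand [Add X] (hp_nonneg : ∀ x, 0 ≤ p x)
    (hp_add : ∀ x y, p (x + y) ≤ p x + p y) {x y : X} (hx : x ∈ pBand p M)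
    (hy : y ∈ pBand p M) : x + y ∈ pBand p M := fun m hm =>
  inf_eq_zero_of_le (hp_nonneg _) (hp_nonneg m) (hp_add x y)
    (add_inf_eq_zero (hp_nonneg x) (hp_nonneg y) (hp_nonneg m) (hx m hm) (hy m hm))

lemma nsmul_mem_pBand [Lattice X] [AddCommGroup X] [AddLeftMono X] (hp_nonneg : ∀ x, 0 ≤ p x)
    (hp_add : ∀ x y, p (x + y) ≤ p x + p y) (hp_mono : ∀ x y, |x| ≤ |y| → p x ≤ p y)
    {x : X} (hx : x ∈ pBand p M) (n : ℕ) : n • x ∈ pBand p M := by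
  induction n with
  | zero =>
    rw [zero_nsmul]
    exact isSolid_pBand hp_nonneg hp_mono hx (by rw [abs_zero]; exact abs_nonneg x)
  | succ n ih => rw [succ_nsmul]; exact add_mem_pBand hp_nonneg hp_add ih hx

lemma apply_smul_le_apply_smul [AddCommGroup X] [Module ℝ X] [Module ℝ E]
    (hp_nonneg : ∀ x, 0 ≤ p x) (hp_smul : ∀ (r : ℝ) (x : X), p (r • x) = |r| • p x) (x : X)
    {s t : ℝ} (hs : 0 ≤ s) (hst : s ≤ t) : p (s • x) ≤ p (t • x) := by
  have hdiff : t • p x - s • p x = p ((t - s) • x) := by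
    rw [hp_smul, abs_of_nonneg (sub_nonneg.2 hst), sub_smul]
  rw [hp_smul, hp_smul, abs_of_nonneg hs, abs_of_nonneg (hs.trans hst)]
  exact sub_nonneg.1 (hdiff ▸ hp_nonneg _)

lemma smul_mem_pBand [Lattice X] [AddCommGroup X] [AddLeftMono X] [Module ℝ X] [Module ℝ E]
    (hp_nonneg : ∀ x, 0 ≤ p x) (hp_smul : ∀ (r : ℝ) (x : X), p (r • x) = |r| • p x)
    (hp_add : ∀ x y, p (x + y) ≤ p x + p y) (hp_mono : ∀ x y, |x| ≤ |y| → p x ≤ p y)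
    {x : X} (hx : x ∈ pBand p M) (r : ℝ) : r • x ∈ pBand p M := by
  obtain ⟨n, hn⟩ := exists_nat_ge |r|
  have hnx : (n : ℝ) • x ∈ pBand p M :=
    Nat.cast_smul_eq_nsmul ℝ n x ▸ nsmul_mem_pBand hp_nonneg hp_add hp_mono hx n
  refine mem_pBand_of_le hp_nonneg hnx ?_
  calc p (r • x) = p (|r| • x) := by rw [hp_smul, hp_smul, abs_abs]
    _ ≤ p ((n : ℝ) • x) := apply_smul_le_apply_smul hp_nonneg hp_smul x (abs_nonneg r) hn

lemma mem_pBand_of_isLUB {ι : Type*} [Nonempty ι] {x : ι → X} {l : X}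
    (hx : ∀ i, x i ∈ pBand p M) (hl : IsLUB (Set.range fun i => p (x i)) (p l)) :
    l ∈ pBand p M := by
  intro m hm
  have hinf := hl.inf_const (p m)
  rw [show (fun i => p (x i) ⊓ p m) = fun _ => 0 from funext (hx · m hm), Set.range_const]
    at hinf
  exact hinf.unique isLUB_singleton

end pBand

variable {X E : Type*}
  [Lattice X] [AddCommGroup X] [Module ℝ X] [CovariantClass X X (· + ·) (· ≤ ·)]
  [Lattice E] [AddCommGroup E] [Module ℝ E] [CovariantClass E E (· + ·) (· ≤ ·)]

theorem p_band_is_band_in_p_Fatou_general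
    (p : X → E)
    (hp_nonneg : ∀ x : X, 0 ≤ p x)
    (hp_smul : ∀ (r : ℝ) (x : X), p (r • x) = |r| • p x)
    (hp_add : ∀ x y : X, p (x + y) ≤ p x + p y)
    (hp_mono : ∀ x y : X, |x| ≤ |y| → p x ≤ p y)
    (h_Fatou : ∀ (A : Type) [Preorder A] [Nonempty A] [IsDirected A (· ≤ ·)]
        (x : A → X) (l : X), (∀ a, 0 ≤ x a) → Monotone x → IsLUB (Set.range x) l →
        IsLUB (Set.range fun a => p (x a)) (p l))
    (M : Set X) :
    (∀ x ∈ {x : X | ∀ m ∈ M, p x ⊓ p m = 0}, ∀ y : X, |y| ≤ |x| →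
        y ∈ {x : X | ∀ m ∈ M, p x ⊓ p m = 0}) ∧
    (∀ x ∈ {x : X | ∀ m ∈ M, p x ⊓ p m = 0}, ∀ y ∈ {x : X | ∀ m ∈ M, p x ⊓ p m = 0},
        x + y ∈ {x : X | ∀ m ∈ M, p x ⊓ p m = 0}) ∧
    (∀ (r : ℝ), ∀ x ∈ {x : X | ∀ m ∈ M, p x ⊓ p m = 0},
        r • x ∈ {x : X | ∀ m ∈ M, p x ⊓ p m = 0}) ∧
    (∀ (A : Type) [Preorder A] [Nonempty A] [IsDirected A (· ≤ ·)] (z : A → X) (l : X),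
        (∀ a, z a ∈ {x : X | ∀ m ∈ M, p x ⊓ p m = 0}) → OConv z l →
        l ∈ {x : X | ∀ m ∈ M, p x ⊓ p m = 0}) := by
  have hsolid : LatticeOrderedAddCommGroup.IsSolid (pBand p M) :=
    isSolid_pBand hp_nonneg hp_mono
  refine ⟨fun x hx y hyx => hsolid hx hyx,
    fun x hx y hy => add_mem_pBand hp_nonneg hp_add hx hy,
    fun r x hx => smul_mem_pBand hp_nonneg hp_smul hp_add hp_mono hx r, ?_⟩
  intro A _ _ _ z l hz hzl
  refine hsolid.mem_of_oConv (fun K _ _ _ x l hpos hmono hx hl => ?_) hz hzl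
  exact mem_pBand_of_isLUB hx (h_Fatou K x l hpos hmono hl)

theorem p_band_is_band_in_p_Fatou
    (p : X → E)
    (hp_nonneg : ∀ x : X, 0 ≤ p x)
    (hp_eq_zero : ∀ x : X, p x = 0 ↔ x = 0)
    (hp_smul : ∀ (r : ℝ) (x : X), p (r • x) = |r| • p x)
    (hp_add : ∀ x y : X, p (x + y) ≤ p x + p y)
    (hp_mono : ∀ x y : X, |x| ≤ |y| → p x ≤ p y)
    (h_Fatou : ∀ (A : Type) [Preorder A] [Nonempty A] [IsDirected A (· ≤ ·)]
        (x : A → X) (l : X), (∀ a, 0 ≤ x a) → Monotone x → IsLUB (Set.range x) l →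
        IsLUB (Set.range fun a => p (x a)) (p l))
    (M : Set X) (hM : M.Nonempty) :
    (∀ x ∈ {x : X | ∀ m ∈ M, p x ⊓ p m = 0}, ∀ y : X, |y| ≤ |x| →
        y ∈ {x : X | ∀ m ∈ M, p x ⊓ p m = 0}) ∧
    (∀ x ∈ {x : X | ∀ m ∈ M, p x ⊓ p m = 0}, ∀ y ∈ {x : X | ∀ m ∈ M, p x ⊓ p m = 0},
        x + y ∈ {x : X | ∀ m ∈ M, p x ⊓ p m = 0}) ∧
    (∀ (r : ℝ), ∀ x ∈ {x : X | ∀ m ∈ M, p x ⊓ p m = 0},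
        r • x ∈ {x : X | ∀ m ∈ M, p x ⊓ p m = 0}) ∧
    (∀ (A : Type) [Preorder A] [Nonempty A] [IsDirected A (· ≤ ·)] (z : A → X) (l : X),
        (∀ a, z a ∈ {x : X | ∀ m ∈ M, p x ⊓ p m = 0}) → OConv z l →
        l ∈ {x : X | ∀ m ∈ M, p x ⊓ p m = 0}) :=
  p_band_is_band_in_p_Fatou_general p hp_nonneg hp_smul hp_add hp_mono h_Fatou M
end

section
/- Let (X,p,E) be an LNVL and e ∈ X₊ a p-unit. Then a net (x_α) is up-convergent to 0 if and only if p(|x_α| ∧ e) →o 0 in E. -/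
variable {X E : Type*}
  [Lattice X] [AddCommGroup X] [Module ℝ X] [CovariantClass X X (· + ·) (· ≤ ·)]
  [Lattice E] [AddCommGroup E] [Module ℝ E] [CovariantClass E E (· + ·) (· ≤ ·)]

section LatticeOrderedGroup

variable {G : Type*} [Lattice G] [AddCommGroup G] [AddLeftMono G]

theorem inf_add_le_inf_add_inf {a b c : G} (ha : 0 ≤ a) (hb : 0 ≤ b) (hc : 0 ≤ c) :
    a ⊓ (b + c) ≤ a ⊓ b + a ⊓ c := by
  suffices a ⊓ (b + c) - a ⊓ b ≤ a ⊓ c by rwa [sub_le_iff_le_add'] at this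
  refine le_inf (sub_le_iff_le_add.2 ?_) (sub_le_iff_le_add'.2 ?_)
  · exact inf_le_left.trans (le_add_of_nonneg_right (le_inf ha hb))
  · calc a ⊓ (b + c) ≤ (a + c) ⊓ (b + c) := inf_le_inf_right _ (le_add_of_nonneg_right hc)
      _ = a ⊓ b + c := (inf_add ..).symm

theorem inf_nsmul_le_nsmul_inf {v e : G} (hv : 0 ≤ v) (he : 0 ≤ e) (n : ℕ) :
    v ⊓ n • e ≤ n • (v ⊓ e) := by
  induction n with
  | zero => simp [hv]
  | succ n ih =>
    calc v ⊓ (n + 1) • e ≤ v ⊓ n • e + v ⊓ e := by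
          rw [succ_nsmul]; exact inf_add_le_inf_add_inf hv (nsmul_nonneg he n) he
      _ ≤ (n + 1) • (v ⊓ e) := by rw [succ_nsmul]; exact add_le_add ih le_rfl

theorem inf_le_inf_add_sub_inf (v u z : G) : v ⊓ u ≤ v ⊓ z + (u - u ⊓ z) := by
  have : v ⊓ u + u ⊓ z ≤ v ⊓ z + u :=
    calc v ⊓ u + u ⊓ z ≤ (v + u) ⊓ (z + u) :=
          le_inf (add_le_add inf_le_left inf_le_left)
            ((add_le_add inf_le_right inf_le_right).trans_eq (add_comm u z))
      _ = v ⊓ z + u := (inf_add ..).symm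
  rwa [← le_sub_iff_add_le, add_sub_assoc] at this

theorem inf_le_nsmul_inf_add_sub_inf {v e : G} (u : G) (hv : 0 ≤ v) (he : 0 ≤ e) (n : ℕ) :
    v ⊓ u ≤ n • (v ⊓ e) + (u - u ⊓ n • e) :=
  (inf_le_inf_add_sub_inf v u (n • e)).trans
    (add_le_add (inf_nsmul_le_nsmul_inf hv he n) le_rfl)

end LatticeOrderedGroup

section Seminorm

variable {V F : Type*} [AddCommGroup V] [Lattice F] [AddCommGroup F] [AddLeftMono F] {p : V → F}

theorem apply_nsmul_le (hp_zero : p 0 = 0) (hp_add : ∀ x y, p (x + y) ≤ p x + p y)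
    (n : ℕ) (x : V) : p (n • x) ≤ n • p x := by
  induction n with
  | zero => simp [hp_zero]
  | succ n ih =>
    rw [succ_nsmul, succ_nsmul]
    exact (hp_add _ _).trans (add_le_add ih le_rfl)

theorem apply_inf_le_nsmul_apply_inf_add [Lattice V] [AddLeftMono V] (hp_zero : p 0 = 0)
    (hp_add : ∀ x y, p (x + y) ≤ p x + p y) (hp_mono : ∀ x y, |x| ≤ |y| → p x ≤ p y)
    {u v e : V} (hu : 0 ≤ u) (hv : 0 ≤ v) (he : 0 ≤ e) (n : ℕ) :
    p (v ⊓ u) ≤ n • p (v ⊓ e) + p (u - u ⊓ n • e) := by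
  have hrhs : 0 ≤ n • (v ⊓ e) + (u - u ⊓ n • e) :=
    add_nonneg (nsmul_nonneg (le_inf hv he) n) (sub_nonneg.2 inf_le_left)
  calc p (v ⊓ u) ≤ p (n • (v ⊓ e) + (u - u ⊓ n • e)) := by
        refine hp_mono _ _ ?_
        rw [abs_of_nonneg (le_inf hv hu), abs_of_nonneg hrhs]
        exact inf_le_nsmul_inf_add_sub_inf u hv he n
    _ ≤ p (n • (v ⊓ e)) + p (u - u ⊓ n • e) := hp_add _ _
    _ ≤ n • p (v ⊓ e) + p (u - u ⊓ n • e) :=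
        add_le_add (apply_nsmul_le hp_zero hp_add n _) le_rfl

end Seminorm

section OrderConvergence

variable {A G : Type*} [Preorder A] [Lattice G] [AddCommGroup G]

theorem isGLB_range_nsmul [AddLeftMono G] {K : Type*} [Nonempty K] {y : K → G}
    (hdir : Directed (· ≥ ·) y) (hy : IsGLB (Set.range y) 0) (n : ℕ) :
    IsGLB (Set.range fun b => n • y b) 0 := by
  refine ⟨by rintro _ ⟨b, rfl⟩; exact nsmul_nonneg (hy.1 ⟨b, rfl⟩) n, fun t ht => ?_⟩
  replace ht : ∀ b, t ≤ n • y b := fun b => ht ⟨b, rfl⟩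
  induction n generalizing t with
  | zero => simpa using ht (Classical.arbitrary K)
  | succ n ih =>
    refine hy.2 ?_
    rintro _ ⟨c, rfl⟩
    refine sub_nonpos.1 (ih _ fun b => sub_le_iff_le_add.2 ?_)
    obtain ⟨d, hbd, hcd⟩ := hdir b c
    calc t ≤ n • y d + y d := (ht d).trans_eq (succ_nsmul _ _)
      _ ≤ n • y b + y c := add_le_add (nsmul_le_nsmul_right hbd n) hcd

/-- The finite infima of `g` form the decreasing net required by `OConv`. -/
theorem oConv_of_isGLB [Nonempty A] [IsDirected A (· ≤ ·)] {I : Type} [Nonempty I]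
    {g : I → G} (hg : IsGLB (Set.range g) 0) {x : A → G} {l : G}
    (hx : ∀ i, ∃ a₀, ∀ a, a₀ ≤ a → |x a - l| ≤ g i) : OConv x l := by
  classical
  obtain ⟨i₀⟩ := ‹Nonempty I›
  choose t ht using hx
  refine ⟨Finset I, (· ⊆ ·), fun S => (insert i₀ S).inf' (Finset.insert_nonempty _ _) g, ⟨∅⟩,
    fun S T => ⟨S ∪ T, Finset.subset_union_left, Finset.subset_union_right⟩,
    fun S T hST => Finset.inf'_mono g (Finset.insert_subset_insert _ hST) _, ⟨?_, ?_⟩, ?_⟩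
  · rintro _ ⟨S, rfl⟩
    exact Finset.le_inf' _ _ fun i _ => hg.1 ⟨i, rfl⟩
  · intro c hc
    refine hg.2 ?_
    rintro _ ⟨i, rfl⟩
    exact (hc ⟨{i}, rfl⟩).trans (Finset.inf'_le _ (by simp))
  · intro S
    obtain ⟨a₀, ha₀⟩ := ((insert i₀ S).image t).exists_le
    exact ⟨a₀, fun a ha => Finset.le_inf' _ _ fun i hi =>
      ht i a ((ha₀ _ (Finset.mem_image_of_mem t hi)).trans ha)⟩

theorem OConv.of_abs_le_nsmul_add [AddLeftMono G] [Nonempty A] [IsDirected A (· ≤ ·)]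
    {f z : A → G} {r : ℕ → G} (hf : OConv f 0) (hr : OConv r 0)
    (hz : ∀ n a, |z a| ≤ n • |f a| + |r n|) : OConv z 0 := by
  obtain ⟨K, s, y, hK, hdir, hmono, hy, hfy⟩ := hf
  obtain ⟨L, -, w, hL, -, -, hw, hrw⟩ := hr
  have hyd : Directed (· ≥ ·) y := fun b c =>
    (hdir b c).imp fun _ hd => ⟨hmono _ _ hd.1, hmono _ _ hd.2⟩
  choose N hN using fun c => (hrw c).imp fun n hn => by simpa using hn n le_rfl
  refine oConv_of_isGLB (g := fun q : K × L => N q.2 • y q.1 + w q.2) ⟨?_, ?_⟩ fun ⟨b, c⟩ => ?_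
  · rintro _ ⟨⟨b, c⟩, rfl⟩
    exact add_nonneg ((isGLB_range_nsmul hyd hy _).1 ⟨b, rfl⟩) (hw.1 ⟨c, rfl⟩)
  · intro t ht
    refine hw.2 ?_
    rintro _ ⟨c, rfl⟩
    refine sub_nonpos.1 ((isGLB_range_nsmul hyd hy (N c)).2 ?_)
    rintro _ ⟨b, rfl⟩
    exact sub_le_iff_le_add.2 (ht ⟨(b, c), rfl⟩)
  · obtain ⟨a₀, ha₀⟩ := hfy b
    refine ⟨a₀, fun a ha => ?_⟩
    calc |z a - 0| = |z a| := by rw [sub_zero]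
      _ ≤ N c • |f a| + |r (N c)| := hz _ _
      _ ≤ N c • y b + w c :=
          add_le_add (nsmul_le_nsmul_right (by simpa using ha₀ a ha) _) (hN c)

end OrderConvergence

theorem up_convergence_at_p_unit_general {A : Type*} [Preorder A] [Nonempty A] [IsDirected A (· ≤ ·)]
    (p : X → E)
    (hp_nonneg : ∀ x : X, 0 ≤ p x)
    (hp_eq_zero : ∀ x : X, p x = 0 ↔ x = 0)
    (hp_add : ∀ x y : X, p (x + y) ≤ p x + p y)
    (hp_mono : ∀ x y : X, |x| ≤ |y| → p x ≤ p y)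
    (e : X) (he_pos : 0 ≤ e)
    (he : ∀ x : X, 0 ≤ x → OConv (fun n : ℕ => p (x - x ⊓ n • e)) 0)
    (x : A → X) :
    (∀ u : X, 0 ≤ u → OConv (fun a => p (|x a| ⊓ u)) (0 : E)) ↔
      OConv (fun a => p (|x a| ⊓ e)) (0 : E) := by
  refine ⟨fun h => h e he_pos, fun h u hu => OConv.of_abs_le_nsmul_add h (he u hu) fun n a => ?_⟩
  simp only [abs_of_nonneg (hp_nonneg _)]
  exact apply_inf_le_nsmul_apply_inf_add ((hp_eq_zero 0).2 rfl) hp_add hp_mono hu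
    (abs_nonneg _) he_pos n

theorem up_convergence_at_p_unit {A : Type*} [Preorder A] [Nonempty A] [IsDirected A (· ≤ ·)]
    (p : X → E)
    (hp_nonneg : ∀ x : X, 0 ≤ p x)
    (hp_eq_zero : ∀ x : X, p x = 0 ↔ x = 0)
    (hp_smul : ∀ (r : ℝ) (x : X), p (r • x) = |r| • p x)
    (hp_add : ∀ x y : X, p (x + y) ≤ p x + p y)
    (hp_mono : ∀ x y : X, |x| ≤ |y| → p x ≤ p y)
    (e : X) (he_pos : 0 ≤ e)
    (he : ∀ x : X, 0 ≤ x → OConv (fun n : ℕ => p (x - x ⊓ n • e)) 0)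
    (x : A → X) :
    (∀ u : X, 0 ≤ u → OConv (fun a => p (|x a| ⊓ u)) (0 : E)) ↔
      OConv (fun a => p (|x a| ⊓ e)) (0 : E) :=
  up_convergence_at_p_unit_general p hp_nonneg hp_eq_zero hp_add hp_mono e he_pos he x
end

section
/- Let (x_α) be a monotone net in an LNVL (X,p,E) that up-converges to x (p(|x_α − x| ∧ u) →o 0 for all u ∈ X₊). Then x_α p-converges to x, i.e., p(x_α − x) →o 0. -/
variable {X E : Type*}
  [Lattice X] [AddCommGroup X] [Module ℝ X] [CovariantClass X X (· + ·) (· ≤ ·)]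
  [Lattice E] [AddCommGroup E] [Module ℝ E] [CovariantClass E E (· + ·) (· ≤ ·)]

theorem monotone_up_convergent_is_p_convergent {A : Type*} [Preorder A] [Nonempty A] [IsDirected A (· ≤ ·)]
    (p : X → E)
    (hp_nonneg : ∀ x : X, 0 ≤ p x)
    (hp_eq_zero : ∀ x : X, p x = 0 ↔ x = 0)
    (hp_smul : ∀ (r : ℝ) (x : X), p (r • x) = |r| • p x)
    (hp_add : ∀ x y : X, p (x + y) ≤ p x + p y)
    (hp_mono : ∀ x y : X, |x| ≤ |y| → p x ≤ p y)
    (x : A → X) (l : X)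
    (hmono : Monotone x)
    (hup : ∀ u : X, 0 ≤ u → OConv (fun a => p (|x a - l| ⊓ u)) (0 : E)) :
    PConv p x l := by
  -- Step 1: every x a ≤ l
  have hle : ∀ a : A, x a ≤ l := by
    intro a
    set u : X := (x a - l) ⊔ 0 with hu
    have hu0 : (0 : X) ≤ u := le_sup_right
    obtain ⟨K, s, y, ⟨hK⟩, hdir, hanti, hglb, hconv⟩ := hup u hu0
    have hpu : p u ∈ lowerBounds (Set.range y) := by
      rintro _ ⟨b, rfl⟩
      obtain ⟨a₀, ha₀⟩ := hconv b
      obtain ⟨c, hc1, hc2⟩ := directed_of (· ≤ ·) a a₀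
      have huc : u ≤ |x c - l| := by
        have h1 : u ≤ (x c - l) ⊔ 0 :=
          sup_le (le_sup_of_le_left (sub_le_sub_right (hmono hc1) l)) le_sup_right
        exact le_trans h1 (sup_le (le_abs_self _) (abs_nonneg _))
      have hc : |p (|x c - l| ⊓ u) - 0| ≤ y b := ha₀ c hc2
      rw [sub_zero, inf_eq_right.2 huc, abs_of_nonneg (hp_nonneg _)] at hc
      exact hc
    have : p u ≤ 0 := hglb.2 hpu
    have hpu0 : p u = 0 := le_antisymm this (hp_nonneg _)
    have : u = 0 := (hp_eq_zero u).1 hpu0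
    have h0 : x a - l ≤ 0 := sup_eq_right.1 this
    exact sub_nonpos.1 h0
  -- Step 2
  obtain ⟨α₀⟩ := (inferInstance : Nonempty A)
  set u : X := l - x α₀ with hu
  have hu0 : (0 : X) ≤ u := sub_nonneg.2 (hle α₀)
  obtain ⟨K, s, y, hK, hdir, hanti, hglb, hconv⟩ := hup u hu0
  refine ⟨K, s, y, hK, hdir, hanti, hglb, ?_⟩
  intro b
  obtain ⟨a₀, ha₀⟩ := hconv b
  obtain ⟨a₁, h1, h2⟩ := directed_of (· ≤ ·) α₀ a₀
  refine ⟨a₁, fun a ha => ?_⟩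
  have hxa : |x a - l| ≤ u := by
    rw [abs_of_nonpos (sub_nonpos.2 (hle a)), hu, neg_sub]
    exact sub_le_sub_left (hmono (le_trans h1 ha)) l
  have hb : |p (|x a - l| ⊓ u) - 0| ≤ y b := ha₀ a (le_trans h2 ha)
  rw [sub_zero, abs_of_nonneg (hp_nonneg _), inf_eq_left.2 hxa] at hb
  rw [sub_zero, abs_of_nonneg (hp_nonneg _)]
  exact le_trans (hp_mono _ _ (le_of_eq (abs_abs _).symm)) hb
end

section
/- Let (X,p,E) be an LNVL with E order complete, and suppose x_α →up x. Then p(|x| − |x| ∧ |x_α|) →o 0 and, if the net (x_α) is p-bounded, p(x) ≤ liminf_α p(x_α) in E. -/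
/-!
Since `|l| - |l| ⊓ |x_α| ≤ |x_α - l| ⊓ |l|`, the first claim is the `up`-convergence hypothesis
tested at `u = |l|`. For the second, splitting `|l| = |l| ⊓ |x_α| + (|l| - |l| ⊓ |x_α|)` gives
`p l ≤ p (x_α) + q_α` with `q_α →o 0`; hence `p l - q_α` is eventually below every tail infimum of
`p (x_α)`, and letting `q_α` decrease to `0` yields `p l ≤ liminf p (x_α)`.
-/

lemma abs_sub_abs_inf_abs_le {X : Type*} [Lattice X] [AddCommGroup X] [AddLeftMono X] (l v : X) :
    |l| - |l| ⊓ |v| ≤ |v - l| ⊓ |l| := by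
  rw [sub_inf, sub_self]
  refine le_inf (sup_le (abs_nonneg _) ?_) (sup_le (abs_nonneg _) (sub_le_self _ (abs_nonneg _)))
  calc |l| - |v| ≤ |(|l| - |v|)| := le_abs_self _
    _ ≤ |l - v| := abs_abs_sub_abs_le _ _
    _ = |v - l| := abs_sub_comm _ _

namespace OConv

variable {A E : Type*} [Preorder A] [AddCommGroup E]

lemma of_nonneg_of_le [Lattice E] [AddLeftMono E] {f g : A → E}
    (hg : OConv g 0) (hf_nonneg : ∀ a, 0 ≤ f a) (hfg : ∀ a, f a ≤ g a) : OConv f 0 := by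
  obtain ⟨K, s, y, hK, hdir, hanti, hglb, hev⟩ := hg
  refine ⟨K, s, y, hK, hdir, hanti, hglb, fun k => ?_⟩
  obtain ⟨a₀, ha₀⟩ := hev k
  refine ⟨a₀, fun a ha => ?_⟩
  have hgy := ha₀ a ha
  rw [sub_zero] at hgy ⊢
  rw [abs_of_nonneg (hf_nonneg a)]
  exact (hfg a).trans ((le_abs_self _).trans hgy)

lemma le_liminf_of_le_add [ConditionallyCompleteLattice E] [AddLeftMono E] {f q : A → E} {c : E}
    (hq : OConv q 0) (hf_below : BddBelow (Set.range f)) (hf_above : BddAbove (Set.range f))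
    (hc : ∀ a, c ≤ f a + q a) : c ≤ ⨆ a, ⨅ b : {b : A // a ≤ b}, f b.1 := by
  obtain ⟨K, -, y, -, -, -, hglb, hev⟩ := hq
  have htail_below (a : A) : BddBelow (Set.range fun b : {b : A // a ≤ b} => f b.1) :=
    hf_below.mono (Set.range_comp_subset_range _ _)
  have htail_above : BddAbove (Set.range fun a : A => ⨅ b : {b : A // a ≤ b}, f b.1) := by
    obtain ⟨e, he⟩ := hf_above
    refine ⟨e, ?_⟩
    rintro _ ⟨a, rfl⟩
    exact (ciInf_le (htail_below a) ⟨a, le_rfl⟩).trans (he ⟨a, rfl⟩)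
  suffices c - ⨆ a, ⨅ b : {b : A // a ≤ b}, f b.1 ∈ lowerBounds (Set.range y) from
    sub_nonpos.1 (hglb.2 this)
  rintro _ ⟨k, rfl⟩
  obtain ⟨a₀, ha₀⟩ := hev k
  have hshift : c - y k ≤ ⨅ b : {b : A // a₀ ≤ b}, f b.1 := by
    refine le_ciInf fun b => sub_le_iff_le_add.2 ((hc b.1).trans (add_le_add le_rfl ?_))
    simpa using (le_abs_self _).trans (ha₀ b.1 b.2)
  exact sub_le_comm.1 (hshift.trans (le_ciSup htail_above a₀))

end OConv

theorem up_convergence_liminf_general {X E : Type*}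
    [Lattice X] [AddCommGroup X] [CovariantClass X X (· + ·) (· ≤ ·)]
    [ConditionallyCompleteLattice E] [AddCommGroup E]
    [CovariantClass E E (· + ·) (· ≤ ·)]
    {A : Type*} [Preorder A]
    (p : X → E)
    (hp_nonneg : ∀ x : X, 0 ≤ p x)
    (hp_add : ∀ x y : X, p (x + y) ≤ p x + p y)
    (hp_mono : ∀ x y : X, |x| ≤ |y| → p x ≤ p y)
    (x : A → X) (l : X)
    (hup : ∀ u : X, 0 ≤ u → OConv (fun a => p (|x a - l| ⊓ u)) (0 : E)) :
    OConv (fun a => p (|l| - |l| ⊓ |x a|)) (0 : E) ∧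
    ((∃ e : E, ∀ a, p (x a) ≤ e) →
      p l ≤ ⨆ a : A, ⨅ b : {b : A // a ≤ b}, p (x b.1)) := by
  have hp_mono_pos {u v : X} (hu : 0 ≤ u) (huv : u ≤ v) : p u ≤ p v :=
    hp_mono u v (by rwa [abs_of_nonneg hu, abs_of_nonneg (hu.trans huv)])
  have hnull : OConv (fun a => p (|l| - |l| ⊓ |x a|)) (0 : E) :=
    (hup |l| (abs_nonneg l)).of_nonneg_of_le (fun _ => hp_nonneg _) fun a =>
      hp_mono_pos (sub_nonneg.2 inf_le_left) (abs_sub_abs_inf_abs_le l (x a))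
  refine ⟨hnull, fun ⟨e, he⟩ => hnull.le_liminf_of_le_add (f := fun a => p (x a))
    ⟨0, Set.forall_mem_range.2 fun a => hp_nonneg (x a)⟩ ⟨e, Set.forall_mem_range.2 he⟩
    fun a => ?_⟩
  have hinf : p (|l| ⊓ |x a|) ≤ p (x a) :=
    hp_mono _ _ (by rw [abs_of_nonneg (le_inf (abs_nonneg _) (abs_nonneg _))]; exact inf_le_right)
  calc p l ≤ p |l| := hp_mono _ _ (abs_abs l).ge
    _ = p (|l| ⊓ |x a| + (|l| - |l| ⊓ |x a|)) := by rw [add_sub_cancel]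
    _ ≤ p (|l| ⊓ |x a|) + p (|l| - |l| ⊓ |x a|) := hp_add _ _
    _ ≤ p (x a) + p (|l| - |l| ⊓ |x a|) := add_le_add hinf le_rfl

theorem up_convergence_liminf {X E : Type*}
    [Lattice X] [AddCommGroup X] [Module ℝ X] [CovariantClass X X (· + ·) (· ≤ ·)]
    [ConditionallyCompleteLattice E] [AddCommGroup E] [Module ℝ E]
    [CovariantClass E E (· + ·) (· ≤ ·)]
    {A : Type*} [Preorder A] [Nonempty A] [IsDirected A (· ≤ ·)]
    (p : X → E)
    (hp_nonneg : ∀ x : X, 0 ≤ p x)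
    (hp_eq_zero : ∀ x : X, p x = 0 ↔ x = 0)
    (hp_smul : ∀ (r : ℝ) (x : X), p (r • x) = |r| • p x)
    (hp_add : ∀ x y : X, p (x + y) ≤ p x + p y)
    (hp_mono : ∀ x y : X, |x| ≤ |y| → p x ≤ p y)
    (x : A → X) (l : X)
    (hup : ∀ u : X, 0 ≤ u → OConv (fun a => p (|x a - l| ⊓ u)) (0 : E)) :
    OConv (fun a => p (|l| - |l| ⊓ |x a|)) (0 : E) ∧
    ((∃ e : E, ∀ a, p (x a) ≤ e) →
      p l ≤ ⨆ a : A, ⨅ b : {b : A // a ≤ b}, p (x b.1)) :=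
  up_convergence_liminf_general p hp_nonneg hp_add hp_mono x l hup
end
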